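/- Let k be a field of characteristic p > 0 and let λ = rp + a with 0 ≤ a < p, a ≠ p − 1 (so a + 1 ≠ 0 in k). Consider the matrix B(λ) over k[s, s⁻¹, t] (the tridiagonal matrix with (i,j) entry −i·t² if i = j+1, (λ−2i)·st if i = j, (λ−i)·s² if i = j−1). Then the kernel of B(λ), as a k[s,t]-submodule of k[s,t]^{λ+1}, is a free graded k[s,t]-module of rank r + 1, with one basis element homogeneous of degree λ and r basis elements homogeneous of degree p − a − 2. In particular, the associated kernel sheaf on ℙ¹ is O(−λ) ⊕ O(a + 2 − p)^{⊕r}. -/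

import Mathlib

/-!
Row `i` of `B(λ)` is the three-term recurrence
`−i t² x_{i−1} + (λ − 2i) s t x_i + (λ − i) s² x_{i+1} = 0`.
Read upwards it determines `x_{i+1}` unless `p ∣ λ − i`, i.e. unless `i = jp + a`; read downwards
it determines `x_{i−1}` unless `p ∣ i`. So a kernel vector vanishing at `0` and at the positions
`jp + a + 1` (`j < r`) is zero, and so is one vanishing at `λ` and at `jp + a + 1 + μ`,
where `μ = p − a − 2`.

The kernel contains `((−1)^i s^{λ−i} t^i)_i`, homogeneous of degree `λ`, and for each `j < r`
the vector with entries `binom(μ, d) s^{μ−d} t^d` at the positions `jp + a + 1 + d`, `d ≤ μ`,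
homogeneous of degree `μ` (its rows reduce to binomial identities since `λ ≡ a ≡ −μ − 2` mod `p`).
At the two sets of distinguished positions these `r + 1` vectors form triangular matrices with
diagonals `s^λ, s^μ, …, s^μ` and `±t^λ, t^μ, …, t^μ`. Hence they are independent, and for every
kernel vector `x` both `s^λ x` and `t^λ x` lie in their span; since `s^λ` and `t^λ` are coprime,
so does `x`.
-/

open MvPolynomial

/-- The tridiagonal matrix `B(λ)` over `k[s,t]` (with `s = X 0`, `t = X 1`) representing the
global operator of the Weyl module `V(λ)` pulled back to `ℙ¹`. -/
noncomputable def Bmat (k : Type*) [Field k] (l : ℕ) :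
    Matrix (Fin (l + 1)) (Fin (l + 1)) (MvPolynomial (Fin 2) k) :=
  Matrix.of fun i j =>
    if (i : ℕ) = (j : ℕ) + 1 then ((-(i : ℕ) : ℤ) : MvPolynomial (Fin 2) k) * X 1 ^ 2
    else if (i : ℕ) = (j : ℕ) then
      (((l : ℤ) - 2 * (i : ℕ) : ℤ) : MvPolynomial (Fin 2) k) * (X 0 * X 1)
    else if (j : ℕ) = (i : ℕ) + 1 then
      (((l : ℤ) - (i : ℕ) : ℤ) : MvPolynomial (Fin 2) k) * X 0 ^ 2
    else 0

open Submodule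

theorem exists_lt_eq_mul_add_of_dvd_sub {p r a i : ℕ} (ha : a < p) (hi : i < r * p + a)
    (hdvd : (p : ℤ) ∣ (i : ℤ) - a) : ∃ j < r, i = j * p + a := by
  obtain ⟨c, hc⟩ := hdvd
  have hc0 : 0 ≤ c := by nlinarith
  have hcr : c < r := by nlinarith
  lift c to ℕ using hc0
  exact ⟨c, by exact_mod_cast hcr, by zify; linarith⟩

theorem Nat.mul_add_le_mul_of_lt {j r : ℕ} (p : ℕ) (h : j < r) : j * p + p ≤ r * p := by
  simpa [Nat.succ_mul] using Nat.mul_le_mul_right p h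

theorem forall_le_eq_zero_of_mul_succ_eq_zero {R : Type*} [MulZeroClass R] [NoZeroDivisors R]
    {y c : ℕ → R} {n : ℕ} (h0 : y 0 = 0)
    (hstep : ∀ i < n, y i = 0 → y (i - 1) = 0 → c i * y (i + 1) = 0)
    (hsing : ∀ i < n, c i = 0 → y (i + 1) = 0) : ∀ i ≤ n, y i = 0 := by
  intro i
  induction i using Nat.strong_induction_on with
  | _ i ih =>
    intro hi
    rcases i with _ | i
    · exact h0
    · by_cases hc : c i = 0
      · exact hsing i (by omega) hc
      · exact (mul_eq_zero.mp (hstep i (by omega) (ih i (by omega) (by omega))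
          (ih (i - 1) (by omega) (by omega)))).resolve_left hc

theorem linearIndependent_of_lowerTriangular {R M : Type*} [CommRing R] [NoZeroDivisors R]
    [AddCommGroup M] [Module R M] {n : ℕ} {v : Fin n → M} (φ : Fin n → M →ₗ[R] R)
    (hupper : ∀ q q', q < q' → φ q (v q') = 0) (hdiag : ∀ q, φ q (v q) ≠ 0) :
    LinearIndependent R v := by
  refine Fintype.linearIndependent_iff.2 fun g hg q => ?_
  induction q using WellFoundedLT.induction with
  | _ q ih =>
    have h := congrArg (φ q) hg
    simp only [map_sum, map_smul, smul_eq_mul, map_zero] at h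
    rw [Finset.sum_eq_single q (fun q' _ hne => ?_) (by simp)] at h
    · exact (mul_eq_zero.mp h).resolve_right (hdiag q)
    · rcases hne.lt_or_gt with hlt | hlt
      · rw [ih q' hlt, zero_mul]
      · rw [hupper q q' hlt, mul_zero]

/-- Forward substitution for the block lower triangular matrix `(φ q (v q'))`, possible as soon as
its diagonal entries divide `c` and the entries below them. -/
theorem exists_forall_apply_smul_sub_sum_eq_zero {R M : Type*} [CommRing R] [AddCommGroup M]
    [Module R M] {r : ℕ} (φ : Fin (r + 1) → M →ₗ[R] R) (v : Fin (r + 1) → M) {c : R}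
    (h0 : ∀ j : Fin r, φ 0 (v j.succ) = 0)
    (hoff : ∀ j j' : Fin r, j' ≠ j → φ j.succ (v j'.succ) = 0)
    (hc₀ : φ 0 (v 0) ∣ c) (hc : ∀ j : Fin r, φ j.succ (v j.succ) ∣ c)
    (hcol : ∀ j : Fin r, φ j.succ (v j.succ) ∣ φ j.succ (v 0)) (x : M) :
    ∃ g : Fin (r + 1) → R, ∀ q, φ q (c • x - ∑ q', g q' • v q') = 0 := by
  obtain ⟨c₀, hc₀⟩ := hc₀
  choose c' hc' using hc
  choose e he using hcol
  refine ⟨Fin.cons (c₀ * φ 0 x) fun j => c' j * φ j.succ x - e j * c₀ * φ 0 x, fun q => ?_⟩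
  simp only [map_sub, map_smul, map_sum, smul_eq_mul]
  rw [Fin.sum_univ_succ]
  simp only [Fin.cons_zero, Fin.cons_succ]
  cases q using Fin.cases with
  | zero =>
    simp only [h0, mul_zero, Finset.sum_const_zero, add_zero]
    linear_combination (φ 0 x) * hc₀
  | succ j =>
    rw [Finset.sum_eq_single j (fun j' _ h => by rw [hoff j j' h, mul_zero]) (by simp)]
    linear_combination (φ j.succ x) * hc' j - (c₀ * φ 0 x) * he j

theorem LinearIndependent.mem_span_of_smul_mem_span {R M ι : Type*} [CommRing R] [IsDomain R]
    [DecompositionMonoid R] [AddCommGroup M] [Module R M] [Module.IsTorsionFree R M] [Fintype ι]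
    {v : ι → M} (hv : LinearIndependent R v) {a b : R} (ha : a ≠ 0) (hab : IsRelPrime a b)
    {x : M} (hax : a • x ∈ span R (Set.range v)) (hbx : b • x ∈ span R (Set.range v)) :
    x ∈ span R (Set.range v) := by
  rw [mem_span_range_iff_exists_fun] at hax hbx ⊢
  obtain ⟨f, hf⟩ := hax
  obtain ⟨g, hg⟩ := hbx
  have hfg : ∀ i, b * f i = a * g i := by
    have h : ∑ i, (b * f i - a * g i) • v i = 0 := by
      simp only [sub_smul, mul_smul, Finset.sum_sub_distrib, ← Finset.smul_sum, hf, hg,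
        smul_comm b a, sub_self]
    exact fun i => sub_eq_zero.1 (Fintype.linearIndependent_iff.1 hv _ h i)
  choose f' hf' using fun i => hab.dvd_of_dvd_mul_left ⟨g i, hfg i⟩
  refine ⟨f', smul_right_injective M ha ?_⟩
  simp only [Finset.smul_sum, smul_smul, ← hf', hf]

theorem Nat.cast_choose_succ_mul {A : Type*} [CommRing A] (n d : ℕ) :
    (n.choose (d + 1) : A) * (d + 1) = n.choose d * (n - d) := by
  rcases le_or_gt d n with h | h
  · have := congrArg (Nat.cast (R := A)) (Nat.choose_succ_right_eq n d)
    push_cast [Nat.cast_sub h] at this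
    exact this
  · simp [Nat.choose_eq_zero_of_lt h, Nat.choose_eq_zero_of_lt (h.trans (Nat.lt_succ_self d))]

namespace Bmat

variable {k : Type*} [Field k]

local notation "R" => MvPolynomial (Fin 2) k

noncomputable def extend (l : ℕ) : (Fin (l + 1) → R) →ₗ[R] ℕ → R :=
  Function.ExtendByZero.linearMap R Fin.val

theorem extend_apply_of_le {l n : ℕ} (w : ℕ → R) (hn : n ≤ l) :
    extend l (fun i : Fin (l + 1) => w i) n = w n :=
  Fin.val_injective.extend_apply (fun i : Fin (l + 1) => w i) 0 ⟨n, Nat.lt_succ_of_le hn⟩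

theorem extend_apply_val {l : ℕ} (x : Fin (l + 1) → R) (i : Fin (l + 1)) : extend l x i = x i :=
  Fin.val_injective.extend_apply x 0 i

theorem extend_apply_eq_sum {l : ℕ} (x : Fin (l + 1) → R) (n : ℕ) :
    extend l x n = ∑ j : Fin (l + 1), if (j : ℕ) = n then x j else 0 := by
  by_cases hn : n < l + 1
  · rw [Fintype.sum_eq_single ⟨n, hn⟩ fun j hj => if_neg fun h => hj (Fin.ext h)]
    rw [if_pos rfl]
    exact extend_apply_val x ⟨n, hn⟩
  · rw [Finset.sum_eq_zero fun j _ => if_neg (by omega)]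
    exact Function.extend_apply' _ _ _ fun ⟨j, hj⟩ => hn (hj ▸ j.isLt)

theorem extend_apply_of_lt {l n : ℕ} (x : Fin (l + 1) → R) (hn : l < n) : extend l x n = 0 := by
  rw [extend_apply_eq_sum, Finset.sum_eq_zero fun j _ => if_neg (by omega)]

/-- Row `i` of `B(λ)` applied to a sequence; at `i = 0` the truncated `i - 1` is harmless, as its
coefficient vanishes. -/
noncomputable def row (l : ℕ) (y : ℕ → R) (i : ℕ) : R :=
  ((-(i : ℕ) : ℤ) : R) * X 1 ^ 2 * y (i - 1)
    + (((l : ℤ) - 2 * i : ℤ) : R) * (X 0 * X 1) * y i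
    + (((l : ℤ) - i : ℤ) : R) * X 0 ^ 2 * y (i + 1)

theorem mulVec_apply {l : ℕ} (x : Fin (l + 1) → R) (i : Fin (l + 1)) :
    (Bmat k l).mulVec x i = row l (extend l x) i := by
  have hentry : ∀ j, Bmat k l i j * x j =
      ((-(i : ℕ) : ℤ) : R) * X 1 ^ 2 * (if (j : ℕ) = i - 1 then x j else 0)
        + (((l : ℤ) - 2 * (i : ℕ) : ℤ) : R) * (X 0 * X 1) * (if (j : ℕ) = i then x j else 0)
        + (((l : ℤ) - (i : ℕ) : ℤ) : R) * X 0 ^ 2 * (if (j : ℕ) = i + 1 then x j else 0) := by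
    intro j
    simp only [Bmat, Matrix.of_apply]
    split_ifs <;> first | omega | ring1 | simp [show (i : ℕ) = 0 by omega]
  simp only [Matrix.mulVec, dotProduct, hentry, Finset.sum_add_distrib, ← Finset.mul_sum,
    extend_apply_eq_sum, row]

theorem mem_ker_iff {l : ℕ} {x : Fin (l + 1) → R} :
    x ∈ LinearMap.ker (Bmat k l).mulVecLin ↔ ∀ i ≤ l, row l (extend l x) i = 0 := by
  simp only [LinearMap.mem_ker, Matrix.mulVecLin_apply, funext_iff, mulVec_apply, Pi.zero_apply]
  exact ⟨fun h i hi => h ⟨i, by omega⟩, fun h i => h i (by omega)⟩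

theorem restrict_mem_ker_iff {l : ℕ} (w : ℕ → R) :
    (fun i : Fin (l + 1) => w i) ∈ LinearMap.ker (Bmat k l).mulVecLin ↔
      ∀ i ≤ l, row l w i = 0 := by
  rw [mem_ker_iff]
  refine forall₂_congr fun i hi => ?_
  rcases hi.lt_or_eq with hi | rfl
  · simp only [row, extend_apply_of_le w (Nat.sub_le_of_le_add (by omega : i ≤ l + 1)),
      extend_apply_of_le w hi.le, extend_apply_of_le w hi]
  · simp [row, extend_apply_of_le w le_rfl, extend_apply_of_le w (Nat.sub_le i 1)]

noncomputable def mainSeq (l i : ℕ) : R := (-1) ^ i * X 0 ^ (l - i) * X 1 ^ i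

noncomputable def binomSeq (μ d : ℕ) : R := (μ.choose d : R) * X 0 ^ (μ - d) * X 1 ^ d

noncomputable def blockSeq (μ m i : ℕ) : R := if m < i then binomSeq μ (i - (m + 1)) else 0

theorem row_mainSeq {l i : ℕ} (hi : i ≤ l) : row l (mainSeq (k := k) l) i = 0 := by
  obtain ⟨m, rfl⟩ := Nat.exists_eq_add_of_le hi
  rcases i with _ | i <;> rcases m with _ | m
  · simp [row]
  all_goals simp only [row, mainSeq, show ∀ a b : ℕ, a + 1 + (b + 1) - a = b + 2 by omega,
      show ∀ a b : ℕ, a + 1 + (b + 1) - (a + 1 + 1) = b by omega, Nat.add_sub_cancel_left,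
      Nat.add_sub_cancel, Nat.sub_self, Nat.zero_sub, zero_add, add_zero, Nat.sub_zero]
  all_goals push_cast; ring

theorem X_zero_pow_mul_binomSeq (μ d : ℕ) :
    X 0 ^ d * binomSeq μ d = (μ.choose d : R) * X 0 ^ μ * X 1 ^ d := by
  rcases le_or_gt d μ with h | h
  · rw [binomSeq, ← Nat.add_sub_cancel' h, Nat.add_sub_cancel_left, pow_add]
    ring
  · simp [binomSeq, Nat.choose_eq_zero_of_lt h]

theorem binomSeq_row_zero (μ : ℕ) :
    (μ : R) * (X 0 * X 1) * binomSeq (k := k) μ 0 - X 0 ^ 2 * binomSeq μ 1 = 0 := by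
  have h := X_zero_pow_mul_binomSeq (k := k) μ 1
  apply mul_left_cancel₀ (X_ne_zero 0 : (X 0 : R) ≠ 0)
  simp only [binomSeq, Nat.choose_zero_right, Nat.sub_zero, Nat.cast_one, pow_zero,
    Nat.choose_one_right] at h ⊢
  linear_combination (-X 0 ^ 2 : R) * h

theorem binomSeq_row (μ d : ℕ) :
    ((μ : R) - (d : R)) * X 1 ^ 2 * binomSeq μ d
      + ((μ : R) - 2 * (d : R) - 2) * (X 0 * X 1) * binomSeq μ (d + 1)
      - ((d : R) + 2) * X 0 ^ 2 * binomSeq μ (d + 2) = 0 := by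
  -- after multiplying by `X 0 ^ d` every power of `X 0` is `X 0 ^ μ`: no truncated exponents
  apply mul_left_cancel₀ (pow_ne_zero d (X_ne_zero 0 : (X 0 : R) ≠ 0))
  have e₀ := X_zero_pow_mul_binomSeq (k := k) μ d
  have e₁ := X_zero_pow_mul_binomSeq (k := k) μ (d + 1)
  have e₂ := X_zero_pow_mul_binomSeq (k := k) μ (d + 2)
  have c₁ : (μ.choose (d + 1) : R) * (d + 1) = μ.choose d * (μ - d) :=
    Nat.cast_choose_succ_mul μ d
  have c₂ : (μ.choose (d + 2) : R) * (d + 2) = μ.choose (d + 1) * (μ - (d + 1)) := by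
    exact_mod_cast Nat.cast_choose_succ_mul (A := R) μ (d + 1)
  linear_combination ((μ : R) - d) * X 1 ^ 2 * e₀ + ((μ : R) - 2 * d - 2) * X 1 * e₁
    - ((d : R) + 2) * e₂ - X 0 ^ μ * X 1 ^ (d + 2) * (c₁ + c₂)

theorem blockSeq_add (μ m e : ℕ) : blockSeq (k := k) μ m (m + 1 + e) = binomSeq μ e := by
  simp [blockSeq, show m < m + 1 + e by omega]

theorem blockSeq_of_le {μ m i : ℕ} (hi : i ≤ m) : blockSeq (k := k) μ m i = 0 :=
  if_neg (by omega)

theorem row_blockSeq {l μ m : ℕ} (hl : (l : R) = (m : R)) (hm : (m : R) + μ + 2 = 0) (i : ℕ) :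
    row l (blockSeq (k := k) μ m) i = 0 := by
  rcases le_or_gt i m with hi | hi
  · rcases hi.lt_or_eq with hi | rfl
    · simp [row, blockSeq_of_le, hi.le, (Nat.sub_le i 1).trans hi.le, Nat.succ_le_of_lt hi]
    · simp [row, blockSeq_of_le, hl]
  obtain ⟨d, rfl⟩ : ∃ d, i = m + 1 + d := ⟨i - (m + 1), by omega⟩
  rcases d with _ | d
  · rw [row, blockSeq_of_le (by omega), blockSeq_add, show m + 1 + 0 + 1 = m + 1 + 1 by rfl,
      blockSeq_add]
    push_cast
    linear_combination binomSeq_row_zero (k := k) μ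
      + (X 0 * X 1 * binomSeq μ 0 + X 0 ^ 2 * binomSeq μ 1) * hl - X 0 * X 1 * binomSeq μ 0 * hm
  · rw [row, show m + 1 + (d + 1) - 1 = m + 1 + d by omega,
      show m + 1 + (d + 1) + 1 = m + 1 + (d + 2) by omega, blockSeq_add, blockSeq_add,
      blockSeq_add]
    push_cast
    linear_combination binomSeq_row (k := k) μ d
      + (X 0 * X 1 * binomSeq μ (d + 1) + X 0 ^ 2 * binomSeq μ (d + 2)) * hl
      - (X 1 ^ 2 * binomSeq μ d + X 0 * X 1 * binomSeq μ (d + 1)) * hm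

theorem blockSeq_of_gt {μ m i : ℕ} (hi : m + 1 + μ < i) : blockSeq (k := k) μ m i = 0 := by
  simp [blockSeq, binomSeq, show m < i by omega,
    Nat.choose_eq_zero_of_lt (show μ < i - (m + 1) by omega)]

theorem blockSeq_mul_add_eq_zero {p a μ j j' i : ℕ} (hμ : a + μ + 2 = p) (hne : j' ≠ j)
    (hlo : j * p + a < i) (hhi : i ≤ j * p + a + 1 + μ) :
    blockSeq (k := k) μ (j' * p + a) i = 0 := by
  rcases hne.lt_or_gt with h | h
  · exact blockSeq_of_gt (by have := Nat.mul_add_le_mul_of_lt p h; omega)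
  · exact blockSeq_of_le (by have := Nat.mul_add_le_mul_of_lt p h; omega)

theorem isHomogeneous_mainSeq {l i : ℕ} (hi : i ≤ l) : (mainSeq (k := k) l i).IsHomogeneous l := by
  have hs : (X 0 ^ (l - i) : R).IsHomogeneous (l - i) := isHomogeneous_X_pow 0 _
  have := ((isHomogeneous_one (Fin 2) k).neg.pow i).mul (hs.mul (isHomogeneous_X_pow 1 i))
  rwa [zero_mul, zero_add, Nat.sub_add_cancel hi, ← mul_assoc] at this

theorem isHomogeneous_blockSeq (μ m i : ℕ) : (blockSeq (k := k) μ m i).IsHomogeneous μ := by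
  rcases le_or_gt i (m + 1 + μ) with h | h
  · rw [blockSeq]
    split_ifs
    · have := ((isHomogeneous_C (Fin 2) (μ.choose (i - (m + 1)) : k)).mul
        (isHomogeneous_X_pow 0 (μ - (i - (m + 1))))).mul (isHomogeneous_X_pow 1 (i - (m + 1)))
      convert this using 1
      · simp [binomSeq]
      · omega
    · exact isHomogeneous_zero _ _ _
  · rw [blockSeq_of_gt h]
    exact isHomogeneous_zero _ _ _

theorem mainSeq_zero (l : ℕ) : mainSeq (k := k) l 0 = X 0 ^ l := by simp [mainSeq]

theorem mainSeq_self (l : ℕ) : mainSeq (k := k) l l = (-1) ^ l * X 1 ^ l := by simp [mainSeq]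

theorem binomSeq_zero (μ : ℕ) : binomSeq (k := k) μ 0 = X 0 ^ μ := by simp [binomSeq]

theorem binomSeq_self (μ : ℕ) : binomSeq (k := k) μ μ = X 1 ^ μ := by simp [binomSeq]

theorem blockSeq_succ (μ m : ℕ) : blockSeq (k := k) μ m (m + 1) = X 0 ^ μ := by
  simpa [binomSeq_zero] using blockSeq_add (k := k) μ m 0

theorem blockSeq_top (μ m : ℕ) : blockSeq (k := k) μ m (m + 1 + μ) = X 1 ^ μ := by
  rw [blockSeq_add, binomSeq_self]

theorem X_zero_pow_dvd_mainSeq {l n m : ℕ} (h : m + n ≤ l) : (X 0 ^ m : R) ∣ mainSeq l n :=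
  ((pow_dvd_pow _ (by omega)).mul_left _).mul_right _

theorem X_one_pow_dvd_mainSeq {l n m : ℕ} (h : m ≤ n) : (X 1 ^ m : R) ∣ mainSeq l n :=
  (pow_dvd_pow _ h).mul_left _

noncomputable def basisSeq (p a μ l r : ℕ) : Fin (r + 1) → ℕ → R :=
  Fin.cons (mainSeq l) fun j => blockSeq μ (j * p + a)

noncomputable def basisVec (p a μ l r : ℕ) (q : Fin (r + 1)) : Fin (l + 1) → R :=
  fun i => basisSeq p a μ l r q i

def lowPos (p a r : ℕ) : Fin (r + 1) → ℕ := Fin.cons 0 fun j => j * p + a + 1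

def highPos (p a μ l r : ℕ) : Fin (r + 1) → ℕ := Fin.cons l fun j => j * p + a + 1 + μ

noncomputable def evalAt (l n : ℕ) : (Fin (l + 1) → R) →ₗ[R] R := LinearMap.proj n ∘ₗ extend l

noncomputable def lowEval (p a l r : ℕ) (q : Fin (r + 1)) : (Fin (l + 1) → R) →ₗ[R] R :=
  evalAt l (lowPos p a r q)

noncomputable def highEval (p a μ l r : ℕ) (q : Fin (r + 1)) : (Fin (l + 1) → R) →ₗ[R] R :=
  evalAt l (highPos p a μ l r q)

section Family

variable {p a μ l r : ℕ}

theorem evalAt_basisVec {n : ℕ} (hn : n ≤ l) (q : Fin (r + 1)) :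
    evalAt l n (basisVec (k := k) p a μ l r q) = basisSeq p a μ l r q n :=
  extend_apply_of_le _ hn

theorem lowPos_le (hμ : a + μ + 2 = p) (hl : l = r * p + a) (q : Fin (r + 1)) :
    lowPos p a r q ≤ l := by
  cases q using Fin.cases with
  | zero => exact Nat.zero_le l
  | succ j =>
    have := Nat.mul_add_le_mul_of_lt p j.isLt
    simp only [lowPos, Fin.cons_succ]
    omega

theorem highPos_le (hμ : a + μ + 2 = p) (hl : l = r * p + a) (q : Fin (r + 1)) :
    highPos p a μ l r q ≤ l := by
  cases q using Fin.cases with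
  | zero => exact le_rfl
  | succ j =>
    have := Nat.mul_add_le_mul_of_lt p j.isLt
    simp only [highPos, Fin.cons_succ]
    omega

theorem basisVec_mem [CharP k p] (hμ : a + μ + 2 = p) (hl : l = r * p + a) (q : Fin (r + 1)) :
    basisVec (k := k) p a μ l r q ∈ LinearMap.ker (Bmat k l).mulVecLin := by
  unfold basisVec
  rw [restrict_mem_ker_iff]
  cases q using Fin.cases with
  | zero => exact fun i hi => row_mainSeq hi
  | succ j =>
    have hp : (p : R) = 0 := CharP.cast_eq_zero R p
    refine fun i _ => row_blockSeq ?_ ?_ i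
    · simp [hl]
    · have : ((a + μ + 2 : ℕ) : R) = 0 := by rw [hμ, hp]
      push_cast at this ⊢
      linear_combination this + (j : R) * hp

theorem smul_sub_sum_mem_ker [CharP k p] (hμ : a + μ + 2 = p) (hl : l = r * p + a)
    {x : Fin (l + 1) → R} (hx : x ∈ LinearMap.ker (Bmat k l).mulVecLin) (c : R)
    (g : Fin (r + 1) → R) :
    c • x - ∑ q, g q • basisVec p a μ l r q ∈ LinearMap.ker (Bmat k l).mulVecLin :=
  sub_mem (Submodule.smul_mem _ _ hx)
    (sum_mem fun q _ => Submodule.smul_mem _ _ (basisVec_mem hμ hl q))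

theorem eq_zero_of_lowPos [CharP k p] (ha : a < p) (hl : l = r * p + a) {x : Fin (l + 1) → R}
    (hx : x ∈ LinearMap.ker (Bmat k l).mulVecLin) (h : ∀ q, lowEval p a l r q x = 0) :
    x = 0 := by
  replace h : ∀ q, extend l x (lowPos p a r q) = 0 := h
  have hrow := mem_ker_iff.1 hx
  have hy : ∀ i ≤ l, extend l x i = 0 := by
    refine forall_le_eq_zero_of_mul_succ_eq_zero (c := fun i => (((l : ℤ) - i : ℤ) : R) * X 0 ^ 2)
      (h 0) (fun i hi h₀ h₁ => ?_) (fun i hi hc => ?_)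
    · simpa [row, h₀, h₁] using hrow i hi.le
    · rw [mul_eq_zero, or_iff_left (pow_ne_zero 2 (X_ne_zero 0)),
        CharP.intCast_eq_zero_iff R p, hl] at hc
      obtain ⟨j, hj, rfl⟩ := exists_lt_eq_mul_add_of_dvd_sub ha (show i < r * p + a by omega)
        (by rw [show (i : ℤ) - a = r * p - (((r * p + a : ℕ) : ℤ) - i) by push_cast; ring]
            exact dvd_sub (dvd_mul_left _ _) hc)
      simpa only [lowPos, Fin.cons_succ] using h (Fin.succ ⟨j, hj⟩)
  funext i
  rw [← extend_apply_val x i]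
  exact hy i i.is_le

theorem eq_zero_of_highPos [CharP k p] (hμ : a + μ + 2 = p) (hl : l = r * p + a)
    {x : Fin (l + 1) → R} (hx : x ∈ LinearMap.ker (Bmat k l).mulVecLin)
    (h : ∀ q, highEval p a μ l r q x = 0) : x = 0 := by
  replace h : ∀ q, extend l x (highPos p a μ l r q) = 0 := h
  have hrow := mem_ker_iff.1 hx
  have hz : ∀ j ≤ l, extend l x (l - j) = 0 := by
    refine forall_le_eq_zero_of_mul_succ_eq_zero
      (c := fun j => ((-((l - j : ℕ) : ℤ) : ℤ) : R) * X 1 ^ 2)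
      (by simpa [highPos] using h 0) (fun j hj h₀ h₁ => ?_) (fun j hj hc => ?_)
    · have h₂ : extend l x (l - j + 1) = 0 := by
        rcases j with _ | j
        · exact extend_apply_of_lt x (by omega)
        · rwa [show l - (j + 1) + 1 = l - (j + 1 - 1) by omega]
      have := hrow (l - j) (Nat.sub_le l j)
      rw [row, h₀, h₂, Nat.sub_sub] at this
      simpa using this
    · rw [mul_eq_zero, or_iff_left (pow_ne_zero 2 (X_ne_zero 1)),
        CharP.intCast_eq_zero_iff R p, Int.dvd_neg] at hc
      obtain ⟨q, hq, hq'⟩ := exists_lt_eq_mul_add_of_dvd_sub (p := p) (r := r) (a := p - 1)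
        (i := l - j - 1) (by omega) (by omega) (by
          rw [show ((l - j - 1 : ℕ) : ℤ) - ((p - 1 : ℕ) : ℤ) = ((l - j : ℕ) : ℤ) - p by omega]
          exact dvd_sub hc dvd_rfl)
      rw [show l - (j + 1) = q * p + a + 1 + μ by omega]
      simpa only [highPos, Fin.cons_succ] using h (Fin.succ ⟨q, hq⟩)
  funext i
  rw [← extend_apply_val x i, ← Nat.sub_sub_self i.is_le]
  exact hz _ (Nat.sub_le l i)

theorem lowEval_basisVec (hμ : a + μ + 2 = p) (hl : l = r * p + a) (q q' : Fin (r + 1)) :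
    lowEval p a l r q (basisVec (k := k) p a μ l r q') = basisSeq p a μ l r q' (lowPos p a r q) :=
  evalAt_basisVec (lowPos_le hμ hl q) q'

theorem highEval_basisVec (hμ : a + μ + 2 = p) (hl : l = r * p + a) (q q' : Fin (r + 1)) :
    highEval p a μ l r q (basisVec (k := k) p a μ l r q') =
      basisSeq p a μ l r q' (highPos p a μ l r q) :=
  evalAt_basisVec (highPos_le hμ hl q) q'

theorem linearIndependent_basisVec (hμ : a + μ + 2 = p) (hl : l = r * p + a) :
    LinearIndependent R (basisVec (k := k) p a μ l r) := by
  refine linearIndependent_of_lowerTriangular (lowEval p a l r)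
    (fun q q' hlt => ?_) (fun q => ?_) <;> rw [lowEval_basisVec hμ hl]
  · obtain ⟨j', rfl⟩ := Fin.exists_succ_eq.2 (Fin.ne_zero_of_lt hlt)
    cases q using Fin.cases with
    | zero =>
      simp only [basisSeq, lowPos, Fin.cons_zero, Fin.cons_succ]
      exact blockSeq_of_le (Nat.zero_le _)
    | succ j =>
      simp only [basisSeq, lowPos, Fin.cons_succ]
      exact blockSeq_mul_add_eq_zero hμ (Fin.val_ne_of_ne (Fin.succ_lt_succ_iff.1 hlt).ne')
        (Nat.lt_succ_self _) (by omega)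
  · cases q using Fin.cases with
    | zero => simp [basisSeq, lowPos, mainSeq_zero]
    | succ j => simp [basisSeq, lowPos, blockSeq_succ]

theorem smul_mem_span_of_lowPos [CharP k p] (ha : a < p) (hμ : a + μ + 2 = p)
    (hl : l = r * p + a) {x : Fin (l + 1) → R} (hx : x ∈ LinearMap.ker (Bmat k l).mulVecLin) :
    (X 0 ^ l : R) • x ∈ span R (Set.range (basisVec p a μ l r)) := by
  have hφ := lowEval_basisVec (k := k) hμ hl
  obtain ⟨g, hg⟩ := exists_forall_apply_smul_sub_sum_eq_zero
    (lowEval p a l r) (basisVec p a μ l r) (c := X 0 ^ l)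
    (fun j => by
      simp only [hφ, basisSeq, lowPos, Fin.cons_zero, Fin.cons_succ]
      exact blockSeq_of_le (Nat.zero_le _))
    (fun j j' hne => by
      simp only [hφ, basisSeq, lowPos, Fin.cons_succ]
      exact blockSeq_mul_add_eq_zero hμ (Fin.val_ne_of_ne hne) (Nat.lt_succ_self _) (by omega))
    (by simp only [hφ, basisSeq, lowPos, Fin.cons_zero, mainSeq_zero, dvd_rfl])
    (fun j => by
      have := highPos_le hμ hl j.succ
      simp only [hφ, basisSeq, lowPos, highPos, Fin.cons_succ, blockSeq_succ] at this ⊢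
      exact pow_dvd_pow _ (by omega))
    (fun j => by
      have := highPos_le hμ hl j.succ
      simp only [hφ, basisSeq, lowPos, highPos, Fin.cons_succ, Fin.cons_zero, blockSeq_succ]
        at this ⊢
      exact X_zero_pow_dvd_mainSeq (by omega)) x
  have hy := eq_zero_of_lowPos ha hl (smul_sub_sum_mem_ker hμ hl hx _ g) hg
  exact (mem_span_range_iff_exists_fun _).2 ⟨g, (sub_eq_zero.1 hy).symm⟩

theorem smul_mem_span_of_highPos [CharP k p] (hμ : a + μ + 2 = p) (hl : l = r * p + a)
    {x : Fin (l + 1) → R} (hx : x ∈ LinearMap.ker (Bmat k l).mulVecLin) :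
    (X 1 ^ l : R) • x ∈ span R (Set.range (basisVec p a μ l r)) := by
  have hφ := highEval_basisVec (k := k) hμ hl
  obtain ⟨g, hg⟩ := exists_forall_apply_smul_sub_sum_eq_zero
    (highEval p a μ l r) (basisVec p a μ l r) (c := X 1 ^ l)
    (fun j => by
      have := Nat.mul_add_le_mul_of_lt p j.isLt
      simp only [hφ, basisSeq, highPos, Fin.cons_zero, Fin.cons_succ]
      exact blockSeq_of_gt (by omega))
    (fun j j' hne => by
      simp only [hφ, basisSeq, highPos, Fin.cons_succ]
      exact blockSeq_mul_add_eq_zero hμ (Fin.val_ne_of_ne hne) (by omega) le_rfl)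
    (by simp only [hφ, basisSeq, highPos, Fin.cons_zero, mainSeq_self,
      (isUnit_neg_one.pow l).mul_left_dvd, dvd_rfl])
    (fun j => by
      have := highPos_le hμ hl j.succ
      simp only [hφ, basisSeq, highPos, Fin.cons_succ, blockSeq_top] at this ⊢
      exact pow_dvd_pow _ (by omega))
    (fun j => by
      simp only [hφ, basisSeq, highPos, Fin.cons_succ, Fin.cons_zero, blockSeq_top]
      exact X_one_pow_dvd_mainSeq (by omega)) x
  have hy := eq_zero_of_highPos hμ hl (smul_sub_sum_mem_ker hμ hl hx _ g) hg
  exact (mem_span_range_iff_exists_fun _).2 ⟨g, (sub_eq_zero.1 hy).symm⟩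

theorem isRelPrime_X_zero_pow_X_one_pow (n : ℕ) : IsRelPrime (X 0 ^ n : R) (X 1 ^ n) :=
  (X_prime.irreducible.isRelPrime_iff_not_dvd.2 (by rw [X_dvd_X]; decide)).pow

theorem span_basisVec [CharP k p] (ha : a < p) (hμ : a + μ + 2 = p) (hl : l = r * p + a) :
    span R (Set.range (basisVec p a μ l r)) = LinearMap.ker (Bmat k l).mulVecLin :=
  le_antisymm (span_le.2 (Set.range_subset_iff.2 (basisVec_mem hμ hl))) fun _ hx =>
    (linearIndependent_basisVec hμ hl).mem_span_of_smul_mem_span (pow_ne_zero l (X_ne_zero 0))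
      (isRelPrime_X_zero_pow_X_one_pow l) (smul_mem_span_of_lowPos ha hμ hl hx)
      (smul_mem_span_of_highPos hμ hl hx)

end Family

end Bmat

theorem ker_Bmat_free_with_degrees_general {k : Type*} [Field k] {p r a l : ℕ}
    (hchar : CharP k p) (ha : a < p) (ha1 : a ≠ p - 1) (hl : l = r * p + a) :
    ∃ b : Module.Basis (Fin (r + 1)) (MvPolynomial (Fin 2) k)
        ↥(LinearMap.ker (Bmat k l).mulVecLin),
      ∀ q : Fin (r + 1), ∀ i : Fin (l + 1),
        MvPolynomial.IsHomogeneous (((b q : Fin (l + 1) → MvPolynomial (Fin 2) k)) i)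
          (if (q : ℕ) = 0 then l else p - a - 2) := by
  have hμ : a + (p - a - 2) + 2 = p := by omega
  refine ⟨(Module.Basis.span (Bmat.linearIndependent_basisVec hμ hl)).map
    (LinearEquiv.ofEq _ _ (Bmat.span_basisVec ha hμ hl)), fun q i => ?_⟩
  simp only [Module.Basis.map_apply, Module.Basis.span_apply, LinearEquiv.coe_ofEq_apply,
    Bmat.basisVec]
  cases q using Fin.cases with
  | zero => simpa [Bmat.basisSeq] using Bmat.isHomogeneous_mainSeq (k := k) i.is_le
  | succ j => simpa [Bmat.basisSeq] using Bmat.isHomogeneous_blockSeq (k := k) (p - a - 2) _ i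

/-- For `λ = rp + a`, `0 ≤ a < p`, `a ≠ p − 1`, the kernel of `B(λ)` acting on
`k[s,t]^{λ+1}` is a free `k[s,t]`-module of rank `r + 1`, with one basis element homogeneous
of degree `λ` and `r` basis elements homogeneous of degree `p − a − 2`.  (Hence the kernel
sheaf on `ℙ¹` is `O(−λ) ⊕ O(a + 2 − p)^{⊕ r}`.) -/
theorem ker_Bmat_free_with_degrees {k : Type*} [Field k] {p r a l : ℕ} (hp : p.Prime)
    (hchar : CharP k p) (ha : a < p) (ha1 : a ≠ p - 1) (hl : l = r * p + a) :
    ∃ b : Module.Basis (Fin (r + 1)) (MvPolynomial (Fin 2) k)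
        ↥(LinearMap.ker (Bmat k l).mulVecLin),
      ∀ q : Fin (r + 1), ∀ i : Fin (l + 1),
        MvPolynomial.IsHomogeneous (((b q : Fin (l + 1) → MvPolynomial (Fin 2) k)) i)
          (if (q : ℕ) = 0 then l else p - a - 2) :=
  ker_Bmat_free_with_degrees_general hchar ha ha1 hl
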